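/- Let z ∈ ℝ^V be logits, p = softmax(z), and fix a token k. Define the curve z(α) = z + α (e_k - p) (the GRPO update direction for token k) and h(α) = H(softmax(z(α))), the entropy along this curve. Then h'(0) = -(S_k - ∑_i p_i S_i), where S_i = p_i(H(p) + log p_i). -/

import Mathlib

open Real BigOperators

noncomputable def softmax {V : ℕ} (z : Fin V → ℝ) : Fin V → ℝ :=
  fun i => Real.exp (z i) / ∑ j, Real.exp (z j)

noncomputable def entropy {V : ℕ} (p : Fin V → ℝ) : ℝ := -∑ i, p i * Real.log (p i)

lemma entropy_softmax_eq {V : ℕ} [Nonempty (Fin V)] (w : Fin V → ℝ) :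
    entropy (softmax w) = Real.log (∑ j, Real.exp (w j)) -
      (∑ j, Real.exp (w j) * w j) / (∑ j, Real.exp (w j)) := by
  have hZ : 0 < ∑ j, Real.exp (w j) :=
    Finset.sum_pos (fun j _ => Real.exp_pos _) Finset.univ_nonempty
  unfold entropy softmax
  have hlog : ∀ i : Fin V, Real.log (Real.exp (w i) / ∑ j, Real.exp (w j))
      = w i - Real.log (∑ j, Real.exp (w j)) := fun i => by
    rw [Real.log_div (Real.exp_ne_zero _) hZ.ne', Real.log_exp]
  simp_rw [hlog, div_mul_eq_mul_div, mul_sub, ← Finset.sum_div, Finset.sum_sub_distrib,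
    ← Finset.sum_mul]
  field_simp
  ring

set_option maxHeartbeats 1000000 in
/-- Along the GRPO update direction `z(α) = z + α (e_k - p)`, the entropy
`h(α) = H(softmax(z(α)))` satisfies `h'(0) = -(S_k - ∑_i p_i S_i)` where
`S_i = p_i (H(p) + log p_i)`. -/
theorem entropy_grpo_deriv (V : ℕ) (z : Fin V → ℝ) (k : Fin V) :
    let p := softmax z
    let H := entropy p
    let S : Fin V → ℝ := fun i => p i * (H + Real.log (p i))
    HasDerivAt (fun α : ℝ => entropy (softmax (fun l => z l + α * ((if l = k then 1 else 0) - p l))))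
      (-(S k - ∑ i, p i * S i)) 0 := by
  intro p H S
  have : Nonempty (Fin V) := ⟨k⟩
  set d : Fin V → ℝ := fun l => (if l = k then 1 else 0) - p l with hd
  set E : Fin V → ℝ := fun i => Real.exp (z i) with hE
  have hZ : 0 < ∑ j, E j := Finset.sum_pos (fun j _ => Real.exp_pos _) Finset.univ_nonempty
  set Z : ℝ := ∑ j, E j with hZdef
  -- rewrite target function
  have key : (fun α : ℝ => entropy (softmax (fun l => z l + α * d l)))
      = fun α => Real.log (∑ j, Real.exp (z j + α * d j)) -
        (∑ j, Real.exp (z j + α * d j) * (z j + α * d j)) / (∑ j, Real.exp (z j + α * d j)) :=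
    funext fun α => entropy_softmax_eq _
  -- derivative of inner linear maps
  have hlin : ∀ j : Fin V, HasDerivAt (fun α : ℝ => z j + α * d j) (d j) 0 := fun j =>
    (hasDerivAt_mul_const (d j)).const_add (z j)
  have hA : HasDerivAt (fun α : ℝ => ∑ j, Real.exp (z j + α * d j)) (∑ j, E j * d j) 0 := by
    refine HasDerivAt.fun_sum fun j _ => ?_
    simpa [hE] using (hlin j).exp
  have hB : HasDerivAt (fun α : ℝ => ∑ j, Real.exp (z j + α * d j) * (z j + α * d j))
      (∑ j, (E j * d j * z j + E j * d j)) 0 := by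
    refine HasDerivAt.fun_sum fun j _ => ?_
    simpa [hE] using ((hlin j).exp.fun_mul (hlin j))
  have hA0 : (∑ j, Real.exp (z j + 0 * d j)) = Z := by simp [hZdef, hE]
  have hAne : (∑ j, Real.exp (z j + 0 * d j)) ≠ 0 := by rw [hA0]; exact hZ.ne'
  have hderiv := (hA.log hAne).fun_sub (hB.fun_div hA hAne)
  rw [key]
  refine hderiv.congr_deriv ?_
  symm
  -- now the value equality
  rw [hA0]
  have hB0 : (∑ j, Real.exp (z j + 0 * d j) * (z j + 0 * d j)) = ∑ j, E j * z j := by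
    simp [hE]
  rw [hB0]
  set B : ℝ := ∑ j, E j * z j with hBdef
  set Q : ℝ := ∑ j, E j * E j with hQdef
  set R : ℝ := ∑ j, E j * E j * z j with hRdef
  have hp : ∀ i, p i = E i / Z := fun i => rfl
  have hA' : (∑ j, E j * d j) = E k - Q / Z := by
    simp only [hd, hp, mul_sub, Finset.sum_sub_distrib, mul_ite, mul_one, mul_zero]
    rw [Finset.sum_ite_eq' Finset.univ k E]
    simp only [Finset.mem_univ, if_true]
    congr 1
    rw [hQdef, Finset.sum_div]
    exact Finset.sum_congr rfl fun j _ => by ring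
  have hB' : (∑ j, (E j * d j * z j + E j * d j)) = (E k * z k - R / Z) + (E k - Q / Z) := by
    rw [Finset.sum_add_distrib, hA']
    congr 1
    simp only [hd, hp, sub_mul, mul_sub, Finset.sum_sub_distrib, mul_ite, mul_one, mul_zero,
      ite_mul, zero_mul]
    rw [Finset.sum_ite_eq' Finset.univ k (fun j => E j * z j)]
    simp only [Finset.mem_univ, if_true]
    congr 1
    rw [hRdef, Finset.sum_div]
    exact Finset.sum_congr rfl fun j _ => by ring
  have hH : H = Real.log Z - B / Z := entropy_softmax_eq z
  have hlogp : ∀ i, Real.log (p i) = z i - Real.log Z := fun i => by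
    rw [hp, hE]
    rw [Real.log_div (Real.exp_ne_zero _) hZ.ne', Real.log_exp]
  have hS : ∀ i, S i = E i / Z * (z i - B / Z) := fun i => by
    simp only [S]; rw [hH, hlogp i, hp i]; ring
  have hsum : (∑ i, p i * S i) = R / Z ^ 2 - B * Q / Z ^ 3 := by
    have e1 : ∀ x : Fin V, E x / Z * (E x / Z * (z x - B / Z))
        = E x * E x * z x / Z ^ 2 - B * (E x * E x) / Z ^ 3 := fun x => by
      field_simp
    simp_rw [hp, hS, e1, Finset.sum_sub_distrib, ← Finset.sum_div, ← Finset.mul_sum]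
    rfl
  rw [hA', hB', hsum, hS k]
  field_simp
  ring
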